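/- Let f : ℝⁿ → ℝ be a multivariate quartic polynomial. Then for every x ∈ ℝⁿ and t > 0, the gradient of the Steklov function with respect to x satisfies ∇_x μ_f(x,t) = ∇f(x) + (t²/6)·Σ_{i=1}^n ∇f_{ii}(x), where f_{ii} := ∂²f/∂x_i². -/

import Mathlib

open MeasureTheory Matrix Filter

/-- Partial derivative of `f` in the `i`-th coordinate direction. -/
noncomputable def pd {n : ℕ} (i : Fin n) (f : (Fin n → ℝ) → ℝ) : (Fin n → ℝ) → ℝ :=
  fun x => fderiv ℝ f x (Pi.single i 1)

/-- The gradient of `f` at `x`, as a vector of first partial derivatives. -/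
noncomputable def grad {n : ℕ} (f : (Fin n → ℝ) → ℝ) (x : Fin n → ℝ) : Fin n → ℝ :=
  fun i => pd i f x

/-- The Hessian matrix of `f` at `x`, of second partial derivatives. -/
noncomputable def hess {n : ℕ} (f : (Fin n → ℝ) → ℝ) (x : Fin n → ℝ) :
    Matrix (Fin n) (Fin n) ℝ :=
  Matrix.of fun i j => pd i (pd j f) x

/-- The Steklov function `μ_f(x,t) = (1/(2t)^n) ∫_{x-t}^{x+t} ⋯ ∫ f`. -/
noncomputable def steklov {n : ℕ} (f : (Fin n → ℝ) → ℝ) (x : Fin n → ℝ) (t : ℝ) : ℝ :=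
  (1 / (2 * t) ^ n) * ∫ τ in Set.univ.pi (fun i => Set.Icc (x i - t) (x i + t)), f τ

/-- `f` is a multivariate quartic polynomial: a polynomial of total degree at most 4. -/
def IsMQP {n : ℕ} (f : (Fin n → ℝ) → ℝ) : Prop :=
  ∃ P : MvPolynomial (Fin n) ℝ, P.totalDegree ≤ 4 ∧ ∀ x, f x = MvPolynomial.eval x P

/-- The closed Euclidean (ℓ₂) ball of radius `L` centered at `0` in `ℝⁿ`. -/
def ball2 {n : ℕ} (L : ℝ) : Set (Fin n → ℝ) := {y | ∑ i, (y i) ^ 2 ≤ L ^ 2}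

/-- The Euclidean (ℓ₂) norm of a vector. -/
noncomputable def l2norm {m : ℕ} (v : Fin m → ℝ) : ℝ := Real.sqrt (∑ i, (v i) ^ 2)

/-!
Differentiation under the integral sign gives `∂ⱼ μ_f = μ_{∂ⱼ f}`, and `∂ⱼ f` is a cubic. For a
cubic `g` the Steklov average factors over the coordinates; the one-dimensional average of
`s ^ a` over `[s - t, s + t]` is `s ^ a + (t² / 6) (s ^ a)''` for `a ≤ 3`, and since a monomial of
degree at most three has at most one exponent `≥ 2`, the product of these averages is
`g + (t² / 6) Σᵢ g_{ii}`. It remains to commute `∂ⱼ` past `∂ᵢ∂ᵢ`.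
-/

lemma Finset.prod_add_eq_prod_add_sum_of_mul_eq_zero {ι R : Type*} [CommSemiring R]
    [DecidableEq ι] (s : Finset ι) (a b : ι → R)
    (hb : (s : Set ι).Pairwise fun i k => b i * b k = 0) :
    ∏ i ∈ s, (a i + b i) = ∏ i ∈ s, a i + ∑ i ∈ s, b i * ∏ k ∈ s.erase i, a k := by
  induction s using Finset.induction_on with
  | empty => simp
  | @insert j s hj ih =>
    have hsum : ∑ i ∈ s, b i * ∏ k ∈ (insert j s).erase i, a k
        = a j * ∑ i ∈ s, b i * ∏ k ∈ s.erase i, a k := by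
      rw [Finset.mul_sum]
      refine Finset.sum_congr rfl fun i hi => ?_
      rw [Finset.erase_insert_of_ne (ne_of_mem_of_not_mem hi hj).symm,
        Finset.prod_insert (fun h => hj (Finset.mem_of_mem_erase h))]
      ring
    have hcross : b j * ∑ i ∈ s, b i * ∏ k ∈ s.erase i, a k = 0 := by
      rw [Finset.mul_sum]
      refine Finset.sum_eq_zero fun i hi => ?_
      rw [← mul_assoc, hb (Finset.mem_insert_self j s) (Finset.mem_insert_of_mem hi)
        (ne_of_mem_of_not_mem hi hj).symm, zero_mul]
    rw [Finset.prod_insert hj, Finset.prod_insert hj, Finset.sum_insert hj,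
      ih (hb.mono (by simp)), Finset.erase_insert hj, hsum, add_mul, mul_add, mul_add, hcross,
      add_zero]
    ring

namespace MvPolynomial

variable {σ : Type*}

section

variable {R : Type*} [CommSemiring R]

lemma pderiv_comm (i j : σ) (P : MvPolynomial σ R) :
    pderiv i (pderiv j P) = pderiv j (pderiv i P) := by
  classical
  ext m
  simp only [coeff_pderiv, Finsupp.add_apply, Finsupp.single_apply, add_right_comm m]
  rcases eq_or_ne i j with rfl | hij
  · rfl
  · simp only [if_neg hij, if_neg hij.symm, add_zero]
    ring

lemma totalDegree_pderiv_le (i : σ) (P : MvPolynomial σ R) :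
    (pderiv i P).totalDegree ≤ P.totalDegree - 1 := by
  classical
  refine Finset.sup_le fun m hm => ?_
  have hm' : m + Finsupp.single i 1 ∈ P.support := by
    rw [mem_support_iff, coeff_pderiv] at hm
    exact mem_support_iff.2 (left_ne_zero_of_mul hm)
  have := le_totalDegree hm'
  rw [Finsupp.sum_add_index' (fun _ => rfl) (fun _ _ _ => rfl),
    Finsupp.sum_single_index rfl] at this
  omega

lemma eval_pderiv_pderiv_monomial [Fintype σ] [DecidableEq σ] (d : σ →₀ ℕ) (c : R) (i : σ)
    (x : σ → R) :
    eval x (pderiv i (pderiv i (monomial d c)))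
      = c * (d i * (d i - 1) : ℕ) * x i ^ (d i - 2) * ∏ k ∈ Finset.univ.erase i, x k ^ d k := by
  rw [pderiv_monomial, pderiv_monomial, eval_monomial, Finsupp.prod_fintype _ _ (by simp),
    ← Finset.mul_prod_erase _ _ (Finset.mem_univ i)]
  simp only [Finsupp.coe_tsub, Pi.sub_apply, Finsupp.single_eq_same, Nat.sub_sub]
  rw [Finset.prod_congr rfl fun k hk => by
    rw [Finsupp.single_eq_of_ne (Finset.ne_of_mem_erase hk), add_zero, Nat.sub_zero]]
  push_cast
  ring

end

variable [Fintype σ]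

lemma hasFDerivAt_eval (P : MvPolynomial σ ℝ) (x : σ → ℝ) :
    HasFDerivAt (fun y => eval y P)
      (∑ i, eval x (pderiv i P) • ContinuousLinearMap.proj (R := ℝ) (φ := fun _ : σ => ℝ) i) x := by
  classical
  induction P using MvPolynomial.induction_on with
  | C a => simpa using hasFDerivAt_const a x
  | add p q hp hq =>
    simpa only [map_add, add_smul, Finset.sum_add_distrib] using hp.fun_add hq
  | mul_X p i hp =>
    have := hp.fun_mul
      ((ContinuousLinearMap.proj (R := ℝ) (φ := fun _ : σ => ℝ) i).hasFDerivAt (x := x))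
    simp only [map_mul, eval_X]
    refine this.congr_fderiv ?_
    ext v
    simp [Pi.single_apply, apply_ite (eval x), add_mul, ite_mul, Finset.sum_add_distrib,
      Finset.mul_sum, mul_assoc]

lemma contDiff_eval (P : MvPolynomial σ ℝ) (k : WithTop ℕ∞) :
    ContDiff ℝ k fun y : σ → ℝ => eval y P := by
  induction P using MvPolynomial.induction_on with
  | C a => simpa using contDiff_const
  | add p q hp hq => simpa using hp.add hq
  | mul_X p i hp => simpa using hp.mul (contDiff_apply ℝ ℝ i)

end MvPolynomial

open MvPolynomial

section

variable {n : ℕ}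

lemma pd_eval (P : MvPolynomial (Fin n) ℝ) (i : Fin n) :
    pd i (fun y => eval y P) = fun y => eval y (pderiv i P) := by
  funext y
  simp [pd, (hasFDerivAt_eval P y).fderiv, Pi.single_apply]

def cube (x : Fin n → ℝ) (t : ℝ) : Set (Fin n → ℝ) :=
  Set.univ.pi fun i => Set.Icc (x i - t) (x i + t)

lemma isCompact_cube (x : Fin n → ℝ) (t : ℝ) : IsCompact (cube x t) :=
  isCompact_univ_pi fun _ => isCompact_Icc

lemma setIntegral_cube_eq_setIntegral_cube_zero (f : (Fin n → ℝ) → ℝ) (x : Fin n → ℝ) (t : ℝ) :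
    ∫ τ in cube x t, f τ = ∫ u in cube 0 t, f (x + u) := by
  have hpre : (x + ·) ⁻¹' cube x t = cube 0 t := by
    ext u
    simp only [cube, Set.mem_preimage, Set.mem_univ_pi, Set.mem_Icc, Pi.add_apply, Pi.zero_apply]
    exact forall_congr' fun i => by constructor <;> intro h <;> constructor <;> linarith [h.1, h.2]
  rw [← hpre, (measurePreserving_add_left (volume : Measure (Fin n → ℝ)) x).setIntegral_preimage_emb
    (measurableEmbedding_addLeft x) f (cube x t)]

lemma hasFDerivAt_setIntegral_cube {f : (Fin n → ℝ) → ℝ} (hf : ContDiff ℝ 1 f)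
    (x : Fin n → ℝ) (t : ℝ) :
    HasFDerivAt (fun y => ∫ τ in cube y t, f τ) (∫ u in cube 0 t, fderiv ℝ f (x + u)) x := by
  rw [show (fun y => ∫ τ in cube y t, f τ) = fun y => ∫ u in cube 0 t, f (y + u) from
    funext fun y => setIntegral_cube_eq_setIntegral_cube_zero f y t]
  obtain ⟨C, hC⟩ := ((isCompact_closedBall x 1).add (isCompact_cube 0 t))
    |>.exists_bound_of_continuousOn (hf.continuous_fderiv one_ne_zero).continuousOn
  refine hasFDerivAt_integral_of_dominated_of_fderiv_le (F := fun y u => f (y + u))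
    (F' := fun y u => fderiv ℝ f (y + u)) (bound := fun _ => C)
    (Metric.ball_mem_nhds x one_pos) ?_ ?_ ?_ ?_ ?_ ?_
  · exact Eventually.of_forall fun y =>
      (hf.continuous.comp (continuous_const.add continuous_id)).aestronglyMeasurable
  · exact (hf.continuous.comp (continuous_const.add continuous_id)).continuousOn
      |>.integrableOn_compact (isCompact_cube 0 t)
  · exact ((hf.continuous_fderiv one_ne_zero).comp
      (continuous_const.add continuous_id)).aestronglyMeasurable
  · refine (ae_restrict_iff' (MeasurableSet.univ_pi fun _ => measurableSet_Icc)).2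
      (Eventually.of_forall fun u hu y hy => hC _ (Set.add_mem_add ?_ hu))
    exact Metric.ball_subset_closedBall hy
  · exact integrableOn_const (isCompact_cube 0 t).measure_lt_top.ne
  · exact Eventually.of_forall fun u y _ =>
      ((hf.differentiable one_ne_zero (y + u)).hasFDerivAt).comp y ((hasFDerivAt_id y).add_const u)

lemma hasFDerivAt_steklov {f : (Fin n → ℝ) → ℝ} (hf : ContDiff ℝ 1 f) (x : Fin n → ℝ)
    (t : ℝ) : HasFDerivAt (fun y => steklov f y t)
      ((1 / (2 * t) ^ n) • ∫ u in cube 0 t, fderiv ℝ f (x + u)) x :=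
  (hasFDerivAt_setIntegral_cube hf x t).const_mul _

lemma pd_steklov {f : (Fin n → ℝ) → ℝ} (hf : ContDiff ℝ 1 f) (x : Fin n → ℝ) (t : ℝ)
    (j : Fin n) : pd j (fun y => steklov f y t) x = steklov (pd j f) x t := by
  have hint : IntegrableOn (fun u => fderiv ℝ f (x + u)) (cube 0 t) :=
    ((hf.continuous_fderiv one_ne_zero).comp (continuous_const.add continuous_id)).continuousOn
      |>.integrableOn_compact (isCompact_cube 0 t)
  rw [pd, (hasFDerivAt_steklov hf x t).fderiv, _root_.smul_apply,
    ContinuousLinearMap.integral_apply hint, smul_eq_mul]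
  exact congrArg _ (setIntegral_cube_eq_setIntegral_cube_zero (pd j f) x t).symm

lemma steklov_const_mul (c : ℝ) (g : (Fin n → ℝ) → ℝ) (x : Fin n → ℝ) (t : ℝ) :
    steklov (fun y => c * g y) x t = c * steklov g x t := by
  rw [steklov, steklov, integral_const_mul, mul_left_comm]

lemma steklov_finset_sum {ι : Type*} (s : Finset ι) {g : ι → (Fin n → ℝ) → ℝ}
    (hg : ∀ k ∈ s, Continuous (g k)) (x : Fin n → ℝ) (t : ℝ) :
    steklov (fun y => ∑ k ∈ s, g k y) x t = ∑ k ∈ s, steklov (g k) x t := by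
  rw [steklov, integral_finsetSum s fun k hk =>
    (hg k hk).continuousOn.integrableOn_compact (isCompact_univ_pi fun _ => isCompact_Icc),
    Finset.mul_sum]
  rfl

lemma steklov_prod (g : Fin n → ℝ → ℝ) (x : Fin n → ℝ) (t : ℝ) :
    steklov (fun y => ∏ i, g i (y i)) x t
      = ∏ i, (2 * t)⁻¹ * ∫ r in Set.Icc (x i - t) (x i + t), g i r := by
  rw [steklov, volume_pi, Measure.restrict_pi_pi, integral_fintype_prod_eq_prod,
    Finset.prod_mul_distrib, Finset.prod_const, Finset.card_univ, Fintype.card_fin, one_div,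
    inv_pow]

-- For `a < 2` the coefficient `a * (a - 1)` vanishes, so the truncated exponent `a - 2` is harmless.
lemma average_pow_of_le_three {a : ℕ} (ha : a ≤ 3) {t : ℝ} (ht : 0 < t) (s : ℝ) :
    (2 * t)⁻¹ * ∫ r in Set.Icc (s - t) (s + t), r ^ a
      = s ^ a + t ^ 2 / 6 * (a * (a - 1) : ℕ) * s ^ (a - 2) := by
  rw [integral_Icc_eq_integral_Ioc, ← intervalIntegral.integral_of_le (by linarith), integral_pow]
  field_simp
  interval_cases a <;> norm_num <;> ring

lemma steklov_eval_monomial_of_degree_le_three {d : Fin n →₀ ℕ} (hd : (d.sum fun _ e => e) ≤ 3)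
    (c : ℝ) (x : Fin n → ℝ) {t : ℝ} (ht : 0 < t) :
    steklov (fun y => eval y (monomial d c)) x t
      = eval x (monomial d c) + t ^ 2 / 6 * ∑ i, eval x (pderiv i (pderiv i (monomial d c))) := by
  rw [Finsupp.sum_fintype _ _ fun _ => rfl] at hd
  have hpair : ((Finset.univ : Finset (Fin n)) : Set (Fin n)).Pairwise fun i k =>
      (t ^ 2 / 6 * (d i * (d i - 1) : ℕ) * x i ^ (d i - 2))
        * (t ^ 2 / 6 * (d k * (d k - 1) : ℕ) * x k ^ (d k - 2)) = 0 := by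
    intro i _ k _ hik
    have := Finset.add_le_sum (f := d) (fun _ _ => Nat.zero_le _) (Finset.mem_univ i)
      (Finset.mem_univ k) hik
    have hzero : ∀ m : ℕ, m < 2 → m * (m - 1) = 0 := by
      intro m hm; interval_cases m <;> rfl
    rcases Nat.lt_or_ge (d i) 2 with hi | hi
    · simp [hzero _ hi]
    · simp [hzero (d k) (by omega)]
  simp only [eval_monomial, Finsupp.prod_fintype _ _ fun _ => pow_zero _,
    eval_pderiv_pderiv_monomial]
  rw [steklov_const_mul, steklov_prod (fun i s => s ^ d i), Finset.prod_congr rfl fun i _ =>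
    average_pow_of_le_three ((Finset.single_le_sum (fun _ _ => Nat.zero_le _)
      (Finset.mem_univ i)).trans hd) ht (x i),
    Finset.prod_add_eq_prod_add_sum_of_mul_eq_zero _ _ _ hpair, mul_add, Finset.mul_sum,
    Finset.mul_sum]
  congr 1
  exact Finset.sum_congr rfl fun i _ => by ring

lemma steklov_eval_of_totalDegree_le_three {P : MvPolynomial (Fin n) ℝ} (hP : P.totalDegree ≤ 3)
    (x : Fin n → ℝ) {t : ℝ} (ht : 0 < t) :
    steklov (fun y => eval y P) x t
      = eval x P + t ^ 2 / 6 * ∑ i, eval x (pderiv i (pderiv i P)) := by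
  have heval : ∀ y, eval y P = ∑ d ∈ P.support, eval y (monomial d (coeff d P)) := fun y => by
    conv_lhs => rw [P.as_sum]
    exact map_sum _ _ _
  have hpderiv : ∀ i, pderiv i (pderiv i P)
      = ∑ d ∈ P.support, pderiv i (pderiv i (monomial d (coeff d P))) := fun i => by
    conv_lhs => rw [P.as_sum]
    simp only [map_sum]
  simp only [heval, hpderiv, map_sum]
  rw [steklov_finset_sum _ fun d _ => continuous_eval _, Finset.sum_comm, Finset.mul_sum,
    ← Finset.sum_add_distrib]
  exact Finset.sum_congr rfl fun d hd =>
    steklov_eval_monomial_of_degree_le_three ((le_totalDegree hd).trans hP) _ x ht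

end

/-- For a multivariate quartic polynomial `f`, the gradient of the Steklov function satisfies
`∇ₓ μ_f(x,t) = ∇f(x) + (t²/6) Σᵢ ∇f_{ii}(x)`. -/
theorem steklov_gradient {n : ℕ} (f : (Fin n → ℝ) → ℝ) (hf : IsMQP f)
    (x : Fin n → ℝ) (t : ℝ) (ht : 0 < t) :
    grad (fun y => steklov f y t) x
      = grad f x + (t ^ 2 / 6) • ∑ i, grad (pd i (pd i f)) x := by
  obtain ⟨P, hP, hfP⟩ := hf
  obtain rfl : f = fun y => eval y P := funext hfP
  funext j
  have hcubic : (pderiv j P).totalDegree ≤ 3 := (totalDegree_pderiv_le j P).trans (by omega)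
  simp only [grad, Pi.add_apply, Pi.smul_apply, Finset.sum_apply, smul_eq_mul, pd_eval]
  rw [pd_steklov (contDiff_eval P 1), pd_eval, steklov_eval_of_totalDegree_le_three hcubic x ht]
  congr 2
  refine Finset.sum_congr rfl fun i _ => ?_
  rw [pderiv_comm j i, pderiv_comm j i]
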